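/- arXiv:2307.00365 — 3 statements merged into one kernel-verified Lean document; each statement's English description precedes it below -/
import Mathlib

section
/- Let H be a real separable Hilbert space with Hilbert (orthonormal) basis (φ_j)_{j≥0}, and let T : H → H be a self-adjoint bounded linear operator with T φ_j = ν_j φ_j for all j ≥ 0, where ν_0 = 1 and (ν_j)_{j≥0} is nonincreasing. Let k ≥ 1 and ω_1 ≥ ω_2 ≥ ⋯ ≥ ω_k > 0. Then for any f_1, …, f_k ∈ H with ⟨f_i, φ_0⟩ = 0 and ⟨f_i, f_j⟩ = δ_{ij} for 1 ≤ i ≤ j ≤ k, one has Σ_{i=1}^k ω_i ⟨(I − T) f_i, f_i⟩ ≥ Σ_{i=1}^k ω_i (1 − ν_i), and equality holds when f_i = φ_i for i = 1, …, k. In particular, Σ_{i=1}^k ω_i (1 − ν_i) is the minimum of Σ_{i=1}^k ω_i ⟨(I − T) f_i, f_i⟩ over such orthonormal families. -/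
open scoped RealInnerProductSpace

/-- Telescoping sum over `Icc a b`. -/
lemma vct_telescope (W : ℕ → ℝ) (a : ℕ) :
    ∀ b : ℕ, a ≤ b + 1 →
      ∑ m ∈ Finset.Icc a b, (W m - W (m + 1)) = W a - W (b + 1) := by
  intro b
  induction b with
  | zero => intro h; interval_cases a <;> simp
  | succ n ih =>
      intro h
      rcases le_or_gt a (n + 1) with h' | h'
      · rw [Finset.sum_Icc_succ_top h', ih h']; ring
      · have ha : a = n + 2 := by omega
        subst ha
        rw [Finset.Icc_eq_empty (by omega)]
        simp

/-- Abel-type double sum exchange. -/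
lemma vct_abel (k : ℕ) (g y : ℕ → ℝ) :
    ∑ m ∈ Finset.Icc 1 k, g m * ∑ i ∈ Finset.Icc 1 m, y i
      = ∑ i ∈ Finset.Icc 1 k, (∑ m ∈ Finset.Icc i k, g m) * y i := by
  simp_rw [Finset.mul_sum, Finset.sum_mul, ← Finset.Ico_add_one_right_eq_Icc]
  rw [← Finset.sum_Ico_Ico_comm 1 (k + 1) (fun i m => g m * y i)]

/-- Ky Fan type partial-sum bound: if `d` has row values in `[0,1]`, vanishes at `0`,
sums to `m`, and `lam` is nondecreasing with `lam 0 = 0`, then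
`∑_{j=1}^m lam j ≤ ∑' j, lam j * d j`. -/
lemma vct_kyfan (lam d : ℕ → ℝ) (m : ℕ) (S : ℝ)
    (hmono : ∀ i j : ℕ, i ≤ j → lam i ≤ lam j)
    (hlam0 : lam 0 = 0)
    (hd0 : d 0 = 0) (hdnn : ∀ j, 0 ≤ d j) (hdle : ∀ j, d j ≤ 1)
    (hdsum : HasSum d (m : ℝ))
    (hS : HasSum (fun j => lam j * d j) S) :
    ∑ j ∈ Finset.Icc 1 m, lam j ≤ S := by
  classical
  set s : Finset ℕ := Finset.Icc 1 m with hs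
  have hcard : s.card = m := by simp [hs]
  -- split the two tsums
  have hsplitS : (∑ j ∈ s, lam j * d j) + ∑' j : {x // x ∉ s}, lam ↑j * d ↑j = S := by
    rw [← hS.tsum_eq]; exact Summable.sum_add_tsum_compl hS.summable
  have hsplitD : (∑ j ∈ s, d j) + ∑' j : {x // x ∉ s}, d ↑j = (m : ℝ) := by
    rw [← hdsum.tsum_eq]; exact Summable.sum_add_tsum_compl hdsum.summable
  -- finite part bound
  have h1 : ∑ j ∈ s, (lam j + lam m * (d j - 1)) ≤ ∑ j ∈ s, lam j * d j := by
    apply Finset.sum_le_sum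
    intro j hj
    have hjm : j ≤ m := (Finset.mem_Icc.mp hj).2
    have hc1 : d j - 1 ≤ 0 := by linarith [hdle j]
    have h := mul_le_mul_of_nonpos_right (hmono j m hjm) hc1
    nlinarith
  -- tail bound
  have h2 : lam m * ∑' j : {x // x ∉ s}, d ↑j ≤ ∑' j : {x // x ∉ s}, lam ↑j * d ↑j := by
    rw [← tsum_mul_left]
    apply Summable.tsum_le_tsum _ ((hdsum.summable.subtype _).mul_left _) (hS.summable.subtype _)
    rintro ⟨j, hj⟩
    have hj' : j ∉ Finset.Icc 1 m := hj
    rw [Finset.mem_Icc] at hj'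
    rcases Nat.eq_zero_or_pos j with rfl | hjpos
    · simp [hd0]
    · have hjm : m < j := by omega
      exact mul_le_mul_of_nonneg_right (hmono m j hjm.le) (hdnn j)
  have h3 : ∑ j ∈ s, (lam j + lam m * (d j - 1))
      = ∑ j ∈ s, lam j + lam m * ((∑ j ∈ s, d j) - m) := by
    rw [Finset.sum_add_distrib, ← Finset.mul_sum, Finset.sum_sub_distrib,
      Finset.sum_const, hcard]
    simp
  have hE : (∑' j : {x // x ∉ s}, d ↑j) = (m : ℝ) - ∑ j ∈ s, d j := by linarith
  rw [hE] at h2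
  have hring : lam m * ((∑ j ∈ s, d j) - m) = -(lam m * ((m : ℝ) - ∑ j ∈ s, d j)) := by ring
  linarith [h1, h2, h3, hsplitS, hring]

/-- Abstract variational characterisation of leading eigenvalues of the
transfer operator: if `T` is a self-adjoint bounded operator on a real
separable Hilbert space with orthonormal basis `(φⱼ)ⱼ≥0` of eigenvectors,
`T φⱼ = νⱼ φⱼ`, `ν₀ = 1`, `(νⱼ)` nonincreasing, and `ω₁ ≥ ⋯ ≥ ω_k > 0`, then
`∑ᵢ ωᵢ ⟨(I - T) fᵢ, fᵢ⟩ ≥ ∑ᵢ ωᵢ (1 - νᵢ)` over families `(fᵢ)` with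
`⟨fᵢ, φ₀⟩ = 0` and `⟨fᵢ, fⱼ⟩ = δᵢⱼ`, with equality at `fᵢ = φᵢ`. -/
theorem variational_characterisation_transfer_operator
    (H : Type*) [NormedAddCommGroup H] [InnerProductSpace ℝ H] [CompleteSpace H]
    (φ : HilbertBasis ℕ ℝ H)
    (T : H →L[ℝ] H)
    (hT_sa : ∀ x y : H, ⟪T x, y⟫ = ⟪x, T y⟫)
    (ν : ℕ → ℝ)
    (hν_eig : ∀ j : ℕ, T (φ j) = ν j • (φ j : H))
    (hν0 : ν 0 = 1)
    (hν_anti : ∀ i j : ℕ, i ≤ j → ν j ≤ ν i)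
    (k : ℕ) (hk : 1 ≤ k)
    (ω : ℕ → ℝ)
    (hω_mono : ∀ i j, 1 ≤ i → i ≤ j → j ≤ k → ω j ≤ ω i)
    (hω_pos : ∀ i, 1 ≤ i → i ≤ k → 0 < ω i) :
    (∀ f : ℕ → H,
      (∀ i, 1 ≤ i → i ≤ k → ⟪f i, φ 0⟫ = 0) →
      (∀ i j, 1 ≤ i → i ≤ j → j ≤ k → ⟪f i, f j⟫ = if i = j then 1 else 0) →
      ∑ i ∈ Finset.Icc 1 k, ω i * (1 - ν i)
        ≤ ∑ i ∈ Finset.Icc 1 k, ω i * ⟪f i - T (f i), f i⟫)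
    ∧ ∑ i ∈ Finset.Icc 1 k, ω i * ⟪(φ i : H) - T (φ i), (φ i : H)⟫
        = ∑ i ∈ Finset.Icc 1 k, ω i * (1 - ν i) := by
  classical
  have hφon : Orthonormal ℝ (φ : ℕ → H) := φ.orthonormal
  have hφnorm : ∀ j, ⟪(φ j : H), (φ j : H)⟫ = 1 := by
    intro j
    rw [real_inner_self_eq_norm_sq, hφon.1 j]; norm_num
  constructor
  · -- inequality part
    intro f hf0 hforth
    set lam : ℕ → ℝ := fun j => 1 - ν j with hlam_def
    have hlam_mono : ∀ i j : ℕ, i ≤ j → lam i ≤ lam j := by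
      intro i j hij; have := hν_anti i j hij; simp [hlam_def]; linarith
    have hlam0 : lam 0 = 0 := by simp [hlam_def, hν0]
    -- Parseval for squares of coefficients
    have hc : ∀ i, 1 ≤ i → i ≤ k → HasSum (fun j => ⟪f i, φ j⟫ ^ 2) 1 := by
      intro i h1 h2
      have h := φ.hasSum_inner_mul_inner (f i) (f i)
      have heq : (fun j => ⟪f i, φ j⟫ * ⟪φ j, f i⟫) = fun j => ⟪f i, φ j⟫ ^ 2 := by
        funext j; rw [real_inner_comm (φ j : H)]; ring
      rw [heq] at h
      have : ⟪f i, f i⟫ = 1 := by simpa using hforth i i h1 le_rfl h2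
      rwa [this] at h
    -- energy expansion
    have hA : ∀ i, 1 ≤ i → i ≤ k →
        HasSum (fun j => lam j * ⟪f i, φ j⟫ ^ 2) ⟪f i - T (f i), f i⟫ := by
      intro i h1 h2
      have ha := φ.hasSum_inner_mul_inner (f i) (f i)
      have hb := φ.hasSum_inner_mul_inner (T (f i)) (f i)
      have h := ha.sub hb
      have heq : (fun j => ⟪f i, φ j⟫ * ⟪φ j, f i⟫ - ⟪T (f i), φ j⟫ * ⟪φ j, f i⟫)
          = fun j => lam j * ⟪f i, φ j⟫ ^ 2 := by
        funext j
        rw [hT_sa (f i) (φ j), hν_eig j, real_inner_smul_right, real_inner_comm (φ j : H)]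
        simp [hlam_def]; ring
      rw [heq] at h
      rwa [← inner_sub_left] at h
    -- partial-sum (Ky Fan) inequality
    have hP : ∀ m, 1 ≤ m → m ≤ k →
        ∑ j ∈ Finset.Icc 1 m, lam j
          ≤ ∑ i ∈ Finset.Icc 1 m, ⟪f i - T (f i), f i⟫ := by
      intro m hm1 hmk
      set d : ℕ → ℝ := fun j => ∑ i ∈ Finset.Icc 1 m, ⟪f i, φ j⟫ ^ 2 with hd_def
      have hmem : ∀ i ∈ Finset.Icc 1 m, 1 ≤ i ∧ i ≤ k := by
        intro i hi
        have := Finset.mem_Icc.mp hi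
        exact ⟨this.1, this.2.trans hmk⟩
      have hd0 : d 0 = 0 := by
        apply Finset.sum_eq_zero
        intro i hi
        rw [hf0 i (hmem i hi).1 (hmem i hi).2]; ring
      have hdnn : ∀ j, 0 ≤ d j :=
        fun j => Finset.sum_nonneg fun i _ => sq_nonneg _
      -- Bessel: column sums at most 1
      have hON : Orthonormal ℝ (fun i : (Finset.Icc 1 m : Finset ℕ) => f ↑i) := by
        rw [orthonormal_iff_ite]
        rintro ⟨i, hi⟩ ⟨j, hj⟩
        obtain ⟨hi1, hik⟩ := hmem i hi
        obtain ⟨hj1, hjk⟩ := hmem j hj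
        rcases le_total i j with h | h
        · have := hforth i j hi1 h hjk
          simpa [Subtype.ext_iff] using this
        · have := hforth j i hj1 h hik
          rw [real_inner_comm]
          simp only [Subtype.ext_iff]
          rw [this]
          by_cases hij : i = j <;> simp [hij, eq_comm]
      have hdle : ∀ j, d j ≤ 1 := by
        intro j
        have hB := hON.sum_inner_products_le (φ j : H) (s := Finset.univ)
        rw [Finset.sum_coe_sort (Finset.Icc 1 m) (fun i => ‖⟪f i, φ j⟫‖ ^ 2)] at hB
        calc d j = ∑ i ∈ Finset.Icc 1 m, ‖⟪f i, φ j⟫‖ ^ 2 := by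
              apply Finset.sum_congr rfl
              intro i _
              rw [Real.norm_eq_abs, sq_abs]
          _ ≤ ‖(φ j : H)‖ ^ 2 := hB
          _ = 1 := by rw [hφon.1 j]; norm_num
      have hdsum : HasSum d (m : ℝ) := by
        have := hasSum_sum (f := fun i j => ⟪f i, φ j⟫ ^ 2)
          (s := Finset.Icc 1 m) (a := fun _ => (1 : ℝ))
          (fun i hi => hc i (hmem i hi).1 (hmem i hi).2)
        simpa [hd_def, Nat.card_Icc] using this
      have hSsum : HasSum (fun j => lam j * d j)
          (∑ i ∈ Finset.Icc 1 m, ⟪f i - T (f i), f i⟫) := by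
        have := hasSum_sum (f := fun i j => lam j * ⟪f i, φ j⟫ ^ 2)
          (s := Finset.Icc 1 m)
          (a := fun i => ⟪f i - T (f i), f i⟫)
          (fun i hi => hA i (hmem i hi).1 (hmem i hi).2)
        convert this using 1
        funext j
        rw [hd_def, Finset.mul_sum]
      exact vct_kyfan lam d m _ hlam_mono hlam0 hd0 hdnn hdle hdsum hSsum
    -- Abel summation
    set W : ℕ → ℝ := fun m => if m ≤ k then ω m else 0 with hW_def
    set g : ℕ → ℝ := fun m => W m - W (m + 1) with hg_def
    have hgsum : ∀ i, 1 ≤ i → i ≤ k → ∑ m ∈ Finset.Icc i k, g m = ω i := by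
      intro i h1 h2
      rw [hg_def, vct_telescope W i k (by omega), hW_def]
      simp [h2, Nat.not_succ_le_self k]
    have hgnn : ∀ m ∈ Finset.Icc 1 k, 0 ≤ g m := by
      intro m hm
      obtain ⟨hm1, hmk⟩ := Finset.mem_Icc.mp hm
      rw [hg_def, hW_def]
      by_cases h : m + 1 ≤ k
      · simp only [hmk, if_pos, h]
        have := hω_mono m (m + 1) hm1 (by omega) h
        linarith
      · simp only [hmk, if_pos, if_neg h]
        have := hω_pos m hm1 hmk
        linarith
    have habel1 : ∑ m ∈ Finset.Icc 1 k, g m * ∑ i ∈ Finset.Icc 1 m, lam i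
        = ∑ i ∈ Finset.Icc 1 k, ω i * (1 - ν i) := by
      rw [vct_abel]
      apply Finset.sum_congr rfl
      intro i hi
      obtain ⟨h1, h2⟩ := Finset.mem_Icc.mp hi
      rw [hgsum i h1 h2]
    have habel2 : ∑ m ∈ Finset.Icc 1 k, g m * ∑ i ∈ Finset.Icc 1 m, ⟪f i - T (f i), f i⟫
        = ∑ i ∈ Finset.Icc 1 k, ω i * ⟪f i - T (f i), f i⟫ := by
      rw [vct_abel]
      apply Finset.sum_congr rfl
      intro i hi
      obtain ⟨h1, h2⟩ := Finset.mem_Icc.mp hi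
      rw [hgsum i h1 h2]
    rw [← habel1, ← habel2]
    apply Finset.sum_le_sum
    intro m hm
    obtain ⟨hm1, hmk⟩ := Finset.mem_Icc.mp hm
    exact mul_le_mul_of_nonneg_left (hP m hm1 hmk) (hgnn m hm)
  · -- equality part
    apply Finset.sum_congr rfl
    intro i _
    rw [hν_eig i, inner_sub_left, real_inner_smul_left, hφnorm i]
    ring
end

section
/- Let H be a real separable Hilbert space with Hilbert (orthonormal) basis (φ_j)_{j≥0}, let (λ_j)_{j≥1} be a nondecreasing sequence of nonnegative reals, let β > 0, let k ≥ 1 and ω_1 ≥ ω_2 ≥ ⋯ ≥ ω_k > 0. For f ∈ H with ⟨f, φ_0⟩ = 0, define Q(f) := Σ_{j≥1} (λ_j² + β λ_j) ⟨f, φ_j⟩² ∈ [0, ∞]. Then for any f_1, …, f_k ∈ H satisfying ⟨f_i, φ_0⟩ = 0 and ⟨f_i, f_j⟩ = δ_{ij} for 1 ≤ i ≤ j ≤ k, one has Σ_{i=1}^k ω_i Q(f_i) ≥ Σ_{i=1}^k ω_i (λ_i² + β λ_i), and equality holds when f_i = φ_i for i = 1, …, k. -/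
open scoped ENNReal
open scoped RealInnerProductSpace

/-!
Put `μⱼ = λⱼ² + β λⱼ`, nondecreasing in `j ≥ 1`. For `m ≤ k` the weights
`tⱼ = ∑_{i ≤ m} ⟨fᵢ, φⱼ⟩²` satisfy `tⱼ ≤ 1` (Bessel) and `∑ⱼ tⱼ = m` (Parseval, as `fᵢ ⊥ φ₀`), so
`Q(f₁) + ⋯ + Q(fₘ) = ∑ⱼ μⱼ tⱼ ≥ μ₁ + ⋯ + μₘ` (Ky Fan): the mass `1 - tⱼ` missing below level `m`
sits above it, where `μ` is larger. Abel summation against the nonincreasing weights `ωᵢ` turns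
these partial-sum inequalities into the weighted one, and `Q(φᵢ) = μᵢ` gives equality.
-/

open Finset

theorem Finset.sum_Icc_one_eq_sum_range {M : Type*} [AddCommMonoid M] (f : ℕ → M) (m : ℕ) :
    ∑ i ∈ Icc 1 m, f i = ∑ i ∈ range m, f (i + 1) := by
  rw [range_eq_Ico, sum_Ico_add', Ico_add_one_right_eq_Icc]

theorem tsum_subtype_one_le_eq_tsum_succ {M : Type*} [AddCommMonoid M] [TopologicalSpace M]
    (f : ℕ → M) : ∑' j : {j : ℕ // 1 ≤ j}, f j = ∑' j, f (j + 1) :=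
  ((Equiv.pnatEquivNat.symm.trans
    (Equiv.subtypeEquivRight fun _ => Nat.succ_le_iff.symm)).tsum_eq fun j => f j).symm

namespace ENNReal

theorem ofReal_sum_mul_of_nonneg {ι : Type*} {s : Finset ι} {a b : ι → ℝ}
    (ha : ∀ i ∈ s, 0 ≤ a i) (hb : ∀ i ∈ s, 0 ≤ b i) :
    ENNReal.ofReal (∑ i ∈ s, a i * b i) = ∑ i ∈ s, ENNReal.ofReal (a i) * ENNReal.ofReal (b i) := by
  rw [ENNReal.ofReal_sum_of_nonneg fun i hi => mul_nonneg (ha i hi) (hb i hi)]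
  exact sum_congr rfl fun i hi => ENNReal.ofReal_mul (ha i hi)

theorem sum_range_le_tsum_mul_of_monotone {μ t : ℕ → ℝ≥0∞} (hμ : Monotone μ)
    (ht : ∀ j, t j ≤ 1) {m : ℕ} (ht_sum : ∑' j, t j = m) :
    ∑ j ∈ range m, μ j ≤ ∑' j, μ j * t j := by
  have h_head_ne_top : ∑ j ∈ range m, t j ≠ ∞ :=
    ne_top_of_le_ne_top (natCast_ne_top m) (ht_sum ▸ ENNReal.sum_le_tsum (range m))
  have h_deficit : ∑ j ∈ range m, (1 - t j) = ∑' j, t (j + m) := by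
    refine (ENNReal.add_right_inj h_head_ne_top).1 ?_
    rw [← sum_add_distrib, ENNReal.summable.sum_add_tsum_nat_add', ht_sum]
    simp [add_tsub_cancel_of_le (ht _)]
  calc ∑ j ∈ range m, μ j
      = ∑ j ∈ range m, μ j * t j + ∑ j ∈ range m, μ j * (1 - t j) := by
        simp [← sum_add_distrib, ← mul_add, add_tsub_cancel_of_le (ht _)]
    _ ≤ ∑ j ∈ range m, μ j * t j + ∑ j ∈ range m, μ m * (1 - t j) := by
        gcongr with j hj
        exact hμ (mem_range.1 hj).le
    _ = ∑ j ∈ range m, μ j * t j + ∑' j, μ m * t (j + m) := by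
        rw [← mul_sum, h_deficit, ENNReal.tsum_mul_left]
    _ ≤ ∑ j ∈ range m, μ j * t j + ∑' j, μ (j + m) * t (j + m) := by
        gcongr with j
        exact hμ (Nat.le_add_left m j)
    _ = ∑' j, μ j * t j := ENNReal.summable.sum_add_tsum_nat_add'

theorem sum_Icc_mul_eq_sum_Icc_tsub_mul_add {ω a : ℕ → ℝ≥0∞} {k : ℕ}
    (hω : ∀ i ∈ Icc 1 k, ω (k + 1) ≤ ω i) :
    ∑ i ∈ Icc 1 (k + 1), ω i * a i
      = ∑ i ∈ Icc 1 k, (ω i - ω (k + 1)) * a i + ω (k + 1) * ∑ i ∈ Icc 1 (k + 1), a i := by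
  rw [sum_Icc_succ_top (by omega), sum_Icc_succ_top (by omega), mul_add, mul_sum, ← add_assoc,
    ← sum_add_distrib]
  congr 1
  refine sum_congr rfl fun i hi => ?_
  rw [← add_mul, tsub_add_cancel_of_le (hω i hi)]

theorem sum_mul_le_sum_mul_of_antitoneOn {ω a b : ℕ → ℝ≥0∞} {k : ℕ}
    (hω : AntitoneOn ω (Set.Icc 1 k))
    (hab : ∀ m ≤ k, ∑ i ∈ Icc 1 m, a i ≤ ∑ i ∈ Icc 1 m, b i) :
    ∑ i ∈ Icc 1 k, ω i * a i ≤ ∑ i ∈ Icc 1 k, ω i * b i := by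
  induction k generalizing ω with
  | zero => simp
  | succ k ih =>
    have hlast : ∀ i ∈ Icc 1 k, ω (k + 1) ≤ ω i := fun i hi => by
      simp only [mem_Icc] at hi
      exact hω ⟨hi.1, by omega⟩ ⟨by omega, le_rfl⟩ (by omega)
    have hω' : AntitoneOn (fun i => ω i - ω (k + 1)) (Set.Icc 1 k) :=
      fun i hi j hj hij => tsub_le_tsub_right
        (hω ⟨hi.1, by have := hi.2; omega⟩ ⟨hj.1, by have := hj.2; omega⟩ hij) _
    rw [sum_Icc_mul_eq_sum_Icc_tsub_mul_add hlast, sum_Icc_mul_eq_sum_Icc_tsub_mul_add hlast]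
    gcongr ?_ + _ * ?_
    · exact ih hω' fun m hm => hab m (by omega)
    · exact hab (k + 1) le_rfl

end ENNReal

section InnerProductSpace

variable {H : Type*} [NormedAddCommGroup H] [InnerProductSpace ℝ H]

theorem orthonormal_of_inner_eq_ite_of_le {ι : Type*} [LinearOrder ι] {v : ι → H}
    (hv : ∀ i j, i ≤ j → ⟪v i, v j⟫ = if i = j then 1 else 0) : Orthonormal ℝ v := by
  refine orthonormal_iff_ite.2 fun i j => ?_
  rcases le_total i j with hij | hji
  · exact hv i j hij
  · rw [real_inner_comm, hv j i hji]
    simp only [eq_comm]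

theorem HilbertBasis.hasSum_inner_sq {ι : Type*} (b : HilbertBasis ι ℝ H)
    (x : H) : HasSum (fun i => ⟪x, b i⟫ ^ 2) (‖x‖ ^ 2) := by
  simpa only [← sq, real_inner_comm x, real_inner_self_eq_norm_sq] using
    b.hasSum_inner_mul_inner x x

theorem sum_range_card_le_sum_tsum_mul_inner_sq {ι : Type*} [Fintype ι] {e : ℕ → H}
    (he : ∀ j, ‖e j‖ = 1) {f : ι → H} (hf : Orthonormal ℝ f)
    (hf_span : ∀ i, HasSum (fun j => ⟪f i, e j⟫ ^ 2) (‖f i‖ ^ 2))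
    {μ : ℕ → ℝ≥0∞} (hμ : Monotone μ) :
    ∑ j ∈ range (Fintype.card ι), μ j
      ≤ ∑ i, ∑' j, μ j * ENNReal.ofReal (⟪f i, e j⟫ ^ 2) := by
  have h_bessel : ∀ j, ∑ i, ENNReal.ofReal (⟪f i, e j⟫ ^ 2) ≤ 1 := fun j => by
    rw [← ENNReal.ofReal_sum_of_nonneg fun i _ => sq_nonneg _, ← ENNReal.ofReal_one]
    refine ENNReal.ofReal_le_ofReal ?_
    simpa [he j] using hf.sum_inner_products_le (e j) (s := univ)
  have h_parseval : ∀ i, ∑' j, ENNReal.ofReal (⟪f i, e j⟫ ^ 2) = 1 := fun i => by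
    rw [← ENNReal.ofReal_tsum_of_nonneg (fun j => sq_nonneg _) (hf_span i).summable,
      (hf_span i).tsum_eq, hf.1 i]
    simp
  have h_total : ∑' j, ∑ i, ENNReal.ofReal (⟪f i, e j⟫ ^ 2) = Fintype.card ι := by
    simp [Summable.tsum_finsetSum fun _ _ => ENNReal.summable, h_parseval]
  calc ∑ j ∈ range (Fintype.card ι), μ j
      ≤ ∑' j, μ j * ∑ i, ENNReal.ofReal (⟪f i, e j⟫ ^ 2) :=
        ENNReal.sum_range_le_tsum_mul_of_monotone hμ h_bessel h_total
    _ = ∑ i, ∑' j, μ j * ENNReal.ofReal (⟪f i, e j⟫ ^ 2) := by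
        simp_rw [mul_sum]
        exact Summable.tsum_finsetSum fun _ _ => ENNReal.summable

theorem HilbertBasis.sum_Icc_le_sum_Icc_tsum_mul_inner_sq_succ
    (φ : HilbertBasis ℕ ℝ H) {μ : ℕ → ℝ≥0∞} (hμ : Monotone fun j => μ (j + 1)) {f : ℕ → H}
    {m : ℕ} (hf0 : ∀ i, 1 ≤ i → i ≤ m → ⟪f i, φ 0⟫ = 0)
    (hf : ∀ i j, 1 ≤ i → i ≤ j → j ≤ m → ⟪f i, f j⟫ = if i = j then 1 else 0) :
    ∑ j ∈ Icc 1 m, μ j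
      ≤ ∑ i ∈ Icc 1 m, ∑' j, μ (j + 1) * ENNReal.ofReal (⟪f i, φ (j + 1)⟫ ^ 2) := by
  have hf' : Orthonormal ℝ fun i : Fin m => f (i + 1) :=
    orthonormal_of_inner_eq_ite_of_le fun i j hij => by
      simpa [Fin.ext_iff] using hf (i + 1) (j + 1) (by omega) (by simpa using hij) (by omega)
  have hf_span : ∀ i : Fin m, HasSum (fun j => ⟪f (i + 1), φ (j + 1)⟫ ^ 2) (‖f (i + 1)‖ ^ 2) :=
    fun i => by
      simpa [hf0 (i + 1) (by omega) (by omega)] using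
        (hasSum_nat_add_iff' 1).2 (φ.hasSum_inner_sq (f (i + 1)))
  rw [sum_Icc_one_eq_sum_range, sum_Icc_one_eq_sum_range,
    ← Fin.sum_univ_eq_sum_range fun i =>
      ∑' j, μ (j + 1) * ENNReal.ofReal (⟪f (i + 1), φ (j + 1)⟫ ^ 2)]
  simpa only [Fintype.card_fin] using
    sum_range_card_le_sum_tsum_mul_inner_sq (fun j => φ.orthonormal.1 (j + 1)) hf' hf_span hμ

end InnerProductSpace

theorem variational_characterisation_slow_cv_general
    (H : Type*) [NormedAddCommGroup H] [InnerProductSpace ℝ H]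
    (φ : HilbertBasis ℕ ℝ H)
    (lam : ℕ → ℝ)
    (hlam_nonneg : ∀ j, 1 ≤ j → 0 ≤ lam j)
    (hlam_mono : ∀ i j, 1 ≤ i → i ≤ j → lam i ≤ lam j)
    (β : ℝ) (hβ : 0 < β)
    (k : ℕ)
    (ω : ℕ → ℝ)
    (hω_mono : ∀ i j, 1 ≤ i → i ≤ j → j ≤ k → ω j ≤ ω i)
    (hω_pos : ∀ i, 1 ≤ i → i ≤ k → 0 < ω i)
    (Q : H → ℝ≥0∞)
    (hQ : ∀ f : H,
      Q f = ∑' j : {j : ℕ // 1 ≤ j},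
        ENNReal.ofReal ((lam j.1 ^ 2 + β * lam j.1) * ⟪f, φ j.1⟫ ^ 2)) :
    (∀ f : ℕ → H,
      (∀ i, 1 ≤ i → i ≤ k → ⟪f i, φ 0⟫ = 0) →
      (∀ i j, 1 ≤ i → i ≤ j → j ≤ k → ⟪f i, f j⟫ = if i = j then 1 else 0) →
      ENNReal.ofReal (∑ i ∈ Finset.Icc 1 k, ω i * (lam i ^ 2 + β * lam i))
        ≤ ∑ i ∈ Finset.Icc 1 k, ENNReal.ofReal (ω i) * Q (f i))
    ∧ ∑ i ∈ Finset.Icc 1 k, ENNReal.ofReal (ω i) * Q (φ i)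
        = ENNReal.ofReal (∑ i ∈ Finset.Icc 1 k, ω i * (lam i ^ 2 + β * lam i)) := by
  set c : ℕ → ℝ := fun j => lam j ^ 2 + β * lam j
  have hc_nonneg : ∀ j, 1 ≤ j → 0 ≤ c j := fun j hj => by
    have := hlam_nonneg j hj
    positivity
  have hc_mono : Monotone fun j => ENNReal.ofReal (c (j + 1)) := fun i j hij => by
    have h₀ := hlam_nonneg (i + 1) (by omega)
    have h₁ := hlam_mono (i + 1) (j + 1) (by omega) (by omega)
    exact ENNReal.ofReal_le_ofReal (by simp only [c]; nlinarith)
  have hQ_succ : ∀ x, Q x = ∑' j, ENNReal.ofReal (c (j + 1)) * ENNReal.ofReal (⟪x, φ (j + 1)⟫ ^ 2) :=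
    fun x => by
      rw [hQ, tsum_subtype_one_le_eq_tsum_succ fun j => ENNReal.ofReal (c j * ⟪x, φ j⟫ ^ 2)]
      exact tsum_congr fun j => ENNReal.ofReal_mul (hc_nonneg _ (by omega))
  have hQ_basis : ∀ i, 1 ≤ i → Q (φ i) = ENNReal.ofReal (c i) := fun i hi => by
    obtain ⟨n, rfl⟩ : ∃ n, i = n + 1 := ⟨i - 1, by omega⟩
    rw [hQ_succ, tsum_eq_single n fun j hj => by
      simp [φ.orthonormal.2 (show n + 1 ≠ j + 1 by omega)]]
    simp [φ.orthonormal.1]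
  rw [ENNReal.ofReal_sum_mul_of_nonneg (fun i hi => (hω_pos i (mem_Icc.1 hi).1 (mem_Icc.1 hi).2).le)
    fun i hi => hc_nonneg i (mem_Icc.1 hi).1]
  refine ⟨fun f hf0 hf => ?_, sum_congr rfl fun i hi => by rw [hQ_basis i (mem_Icc.1 hi).1]⟩
  refine ENNReal.sum_mul_le_sum_mul_of_antitoneOn
    (fun i hi j hj hij => ENNReal.ofReal_le_ofReal (hω_mono i j hi.1 hij hj.2)) fun m hm => ?_
  simpa only [hQ_succ] using
    φ.sum_Icc_le_sum_Icc_tsum_mul_inner_sq_succ (μ := fun j => ENNReal.ofReal (c j)) hc_mono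
      (fun i hi him => hf0 i hi (him.trans hm)) fun i j hi hij hjm => hf i j hi hij (hjm.trans hm)

/-- Abstract form of Proposition 1: the first `k` nontrivial eigenfunctions
minimise the slow-CV objective. For an orthonormal basis `(φⱼ)ⱼ≥0`,
nonnegative nondecreasing `(λⱼ)ⱼ≥1`, `β > 0`, and weights `ω₁ ≥ ⋯ ≥ ω_k > 0`,
the quadratic form `Q(f) = ∑ⱼ≥1 (λⱼ² + β λⱼ) ⟨f, φⱼ⟩²` satisfies
`∑ᵢ ωᵢ Q(fᵢ) ≥ ∑ᵢ ωᵢ (λᵢ² + β λᵢ)` over families `(fᵢ)` with `⟨fᵢ, φ₀⟩ = 0`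
and `⟨fᵢ, fⱼ⟩ = δᵢⱼ`, with equality at `fᵢ = φᵢ`. -/
theorem variational_characterisation_slow_cv
    (H : Type*) [NormedAddCommGroup H] [InnerProductSpace ℝ H] [CompleteSpace H]
    (φ : HilbertBasis ℕ ℝ H)
    (lam : ℕ → ℝ)
    (hlam_nonneg : ∀ j, 1 ≤ j → 0 ≤ lam j)
    (hlam_mono : ∀ i j, 1 ≤ i → i ≤ j → lam i ≤ lam j)
    (β : ℝ) (hβ : 0 < β)
    (k : ℕ) (hk : 1 ≤ k)
    (ω : ℕ → ℝ)
    (hω_mono : ∀ i j, 1 ≤ i → i ≤ j → j ≤ k → ω j ≤ ω i)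
    (hω_pos : ∀ i, 1 ≤ i → i ≤ k → 0 < ω i)
    (Q : H → ℝ≥0∞)
    (hQ : ∀ f : H,
      Q f = ∑' j : {j : ℕ // 1 ≤ j},
        ENNReal.ofReal ((lam j.1 ^ 2 + β * lam j.1) * ⟪f, φ j.1⟫ ^ 2)) :
    (∀ f : ℕ → H,
      (∀ i, 1 ≤ i → i ≤ k → ⟪f i, φ 0⟫ = 0) →
      (∀ i j, 1 ≤ i → i ≤ j → j ≤ k → ⟪f i, f j⟫ = if i = j then 1 else 0) →
      ENNReal.ofReal (∑ i ∈ Finset.Icc 1 k, ω i * (lam i ^ 2 + β * lam i))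
        ≤ ∑ i ∈ Finset.Icc 1 k, ENNReal.ofReal (ω i) * Q (f i))
    ∧ ∑ i ∈ Finset.Icc 1 k, ENNReal.ofReal (ω i) * Q (φ i)
        = ENNReal.ofReal (∑ i ∈ Finset.Icc 1 k, ω i * (lam i ^ 2 + β * lam i)) :=
  variational_characterisation_slow_cv_general H φ lam hlam_nonneg hlam_mono β hβ k ω hω_mono hω_pos
    Q hQ
end

section
/- Let (λ_j)_{j≥1} be a nondecreasing sequence of nonnegative reals, let k ≥ 1, and let ω_1 ≥ ω_2 ≥ ⋯ ≥ ω_k > 0. Let c_1, …, c_k be elements of ℓ²(ℕ_{≥1}) that are orthonormal, i.e. Σ_{j≥1} c_{i,j} c_{i',j} = δ_{i i'} for 1 ≤ i ≤ i' ≤ k, and assume Σ_{j≥1} λ_j c_{i,j}² < ∞ for each i. Then Σ_{i=1}^k ω_i Σ_{j≥1} λ_j c_{i,j}² ≥ Σ_{i=1}^k ω_i λ_i. -/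
/-!
Abel summation reduces the weighted inequality, for weights `ω₁ ≥ ⋯ ≥ ω_k > 0`, to the unweighted
ones `∑_{i ≤ m} λᵢ ≤ ∑_{i ≤ m} ∑ⱼ λⱼ cᵢⱼ²` for `m ≤ k`. For these, the occupation numbers
`tⱼ = ∑_{i ≤ m} cᵢⱼ²` lie in `[0, 1]` by Bessel's inequality and add up to `m`, so the mass `m` spread
over the nondecreasing `λⱼ` costs at least what it costs when packed onto `j = 1, …, m`.
-/

open Finset

theorem sum_le_of_hasSum_mul_of_threshold {ι : Type*} {lam t : ι → ℝ} {s : Finset ι} {μ a : ℝ}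
    (ht_nonneg : ∀ j, 0 ≤ t j) (ht_le_one : ∀ j, t j ≤ 1) (ht : HasSum t #s)
    (hlt : HasSum (fun j => lam j * t j) a)
    (hs : ∀ j ∈ s, lam j ≤ μ) (hsc : ∀ j ∉ s, μ ≤ lam j) :
    ∑ j ∈ s, lam j ≤ a := by
  classical
  set e : ι → ℝ := fun j => if j ∈ s then 1 else 0
  have he : HasSum e #s := by
    simpa [e] using hasSum_sum_of_ne_finset_zero (f := e) (s := s) (by simp [e])
  have hle : HasSum (fun j => lam j * e j) (∑ j ∈ s, lam j) := by
    simpa [e] using hasSum_sum_of_ne_finset_zero (f := fun j => lam j * e j) (s := s)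
      (by simp +contextual [e])
  have key := (hlt.sub (ht.mul_left μ)).sub (hle.sub (he.mul_left μ))
  rw [show a - μ * #s - (∑ j ∈ s, lam j - μ * #s) = a - ∑ j ∈ s, lam j by ring] at key
  refine sub_nonneg.1 (key.nonneg fun j => ?_)
  rw [show lam j * t j - μ * t j - (lam j * e j - μ * e j) = (lam j - μ) * (t j - e j) by ring]
  by_cases hj : j ∈ s
  · exact mul_nonneg_of_nonpos_of_nonpos (sub_nonpos.2 (hs j hj))
      (by simpa [e, hj] using ht_le_one j)
  · exact mul_nonneg (sub_nonneg.2 (hsc j hj)) (by simpa [e, hj] using ht_nonneg j)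

theorem sum_sq_apply_le_one_of_hasSum_mul {α ι : Type*} [DecidableEq ι] {c : ι → α → ℝ}
    {s : Finset ι}
    (h : ∀ i ∈ s, ∀ i' ∈ s, HasSum (fun j => c i j * c i' j) (if i = i' then 1 else 0))
    (j : α) : ∑ i ∈ s, c i j ^ 2 ≤ 1 := by
  have hmem (i : s) : Memℓp (c i) 2 := by
    refine memℓp_gen ((h i i.2 i i.2).summable.congr fun j => ?_)
    simp [sq]
  let v (i : s) : lp (fun _ : α => ℝ) 2 := ⟨c i, hmem i⟩
  have hv : Orthonormal ℝ v := by
    refine orthonormal_iff_ite.2 fun p q => (lp.hasSum_inner (v p) (v q)).unique ?_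
    simpa [v, mul_comm (c q _)] using h p p.2 q q.2
  classical
  have bessel := hv.sum_inner_products_le (lp.single 2 j (1 : ℝ)) (s := univ)
  simpa [v, lp.inner_single_right, lp.norm_single, ← s.sum_coe_sort] using bessel

theorem sum_Icc_le_sum_Icc_tsum_mul_sq {lam : ℕ → ℝ} (hlam : MonotoneOn lam (Set.Ici 1))
    {c : ℕ → ℕ → ℝ} {m : ℕ} (hm : 1 ≤ m)
    (h_orth : ∀ i ∈ Icc 1 m, ∀ i' ∈ Icc 1 m,
      HasSum (fun j : {j : ℕ // 1 ≤ j} => c i j.1 * c i' j.1) (if i = i' then 1 else 0))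
    (h_summable : ∀ i ∈ Icc 1 m, Summable fun j : {j : ℕ // 1 ≤ j} => lam j.1 * c i j.1 ^ 2) :
    ∑ i ∈ Icc 1 m, lam i ≤ ∑ i ∈ Icc 1 m, ∑' j : {j : ℕ // 1 ≤ j}, lam j.1 * c i j.1 ^ 2 := by
  let s := (Icc 1 m).subtype (1 ≤ ·)
  have hs_mem (j : {j : ℕ // 1 ≤ j}) : j ∈ s ↔ j.1 ≤ m := by simp [s, j.2]
  have hs_pos : ∀ i ∈ Icc 1 m, 1 ≤ i := fun i hi => (mem_Icc.1 hi).1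
  have hcard : #s = m := by simp [s, card_subtype, filter_true_of_mem hs_pos]
  rw [← sum_subtype_of_mem lam hs_pos]
  refine sum_le_of_hasSum_mul_of_threshold (t := fun j => ∑ i ∈ Icc 1 m, c i j.1 ^ 2)
    (μ := lam m) (fun j => sum_nonneg fun i _ => sq_nonneg _)
    (fun j => sum_sq_apply_le_one_of_hasSum_mul h_orth j) ?_ ?_
    (fun j hj => hlam j.2 hm ((hs_mem j).1 hj)) (fun j hj => hlam hm j.2 ?_)
  · rw [hcard]
    simpa [sq] using hasSum_sum fun i hi => h_orth i hi i hi
  · simpa [mul_sum] using hasSum_sum fun i hi => (h_summable i hi).hasSum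
  · exact (not_le.1 ((hs_mem j).not.1 hj)).le

theorem sum_Icc_mul_le_sum_Icc_mul {w a b : ℕ → ℝ} {k : ℕ} (hw : AntitoneOn w (Set.Icc 1 k))
    (hw_nonneg : ∀ i ∈ Icc 1 k, 0 ≤ w i)
    (hab : ∀ m ∈ Icc 1 k, ∑ i ∈ Icc 1 m, a i ≤ ∑ i ∈ Icc 1 m, b i) :
    ∑ i ∈ Icc 1 k, w i * a i ≤ ∑ i ∈ Icc 1 k, w i * b i := by
  induction k generalizing w with
  | zero => simp
  | succ k ih =>
    have peel (f : ℕ → ℝ) : ∑ i ∈ Icc 1 (k + 1), w i * f i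
        = ∑ i ∈ Icc 1 k, (w i - w (k + 1)) * f i + w (k + 1) * ∑ i ∈ Icc 1 (k + 1), f i := by
      rw [sum_Icc_succ_top (by omega), sum_Icc_succ_top (by omega), mul_add, mul_sum]
      simp only [sub_mul, sum_sub_distrib]
      ring
    have hsub : Set.Icc 1 k ⊆ Set.Icc 1 (k + 1) := Set.Icc_subset_Icc_right k.le_succ
    have hk : k + 1 ∈ Set.Icc 1 (k + 1) := ⟨by omega, le_rfl⟩
    rw [peel a, peel b]
    gcongr ?_ + ?_
    · refine ih (fun i hi j hj hij => sub_le_sub_right (hw (hsub hi) (hsub hj) hij) _)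
        (fun i hi => ?_) fun m hm => hab m ?_
      · have hi' := coe_Icc 1 k ▸ mem_coe.2 hi
        exact sub_nonneg.2 (hw (hsub hi') hk ((mem_Icc.1 hi).2.trans k.le_succ))
      · exact Icc_subset_Icc_right k.le_succ hm
    · exact mul_le_mul_of_nonneg_left (hab _ (by simp)) (hw_nonneg _ (by simp))

theorem coefficient_level_inequality_general
    (lam : ℕ → ℝ)
    (hlam_mono : ∀ i j, 1 ≤ i → i ≤ j → lam i ≤ lam j)
    (k : ℕ)
    (ω : ℕ → ℝ)
    (hω_mono : ∀ i j, 1 ≤ i → i ≤ j → j ≤ k → ω j ≤ ω i)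
    (hω_pos : ∀ i, 1 ≤ i → i ≤ k → 0 < ω i)
    (c : ℕ → ℕ → ℝ)
    (h_orth : ∀ i i', 1 ≤ i → i ≤ i' → i' ≤ k →
      HasSum (fun j : {j : ℕ // 1 ≤ j} => c i j.1 * c i' j.1)
        (if i = i' then 1 else 0))
    (h_summable : ∀ i, 1 ≤ i → i ≤ k →
      Summable (fun j : {j : ℕ // 1 ≤ j} => lam j.1 * c i j.1 ^ 2)) :
    ∑ i ∈ Finset.Icc 1 k, ω i * lam i
      ≤ ∑ i ∈ Finset.Icc 1 k,
          ω i * ∑' j : {j : ℕ // 1 ≤ j}, lam j.1 * c i j.1 ^ 2 := by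
  have h_orth_symm : ∀ i ∈ Icc 1 k, ∀ i' ∈ Icc 1 k,
      HasSum (fun j : {j : ℕ // 1 ≤ j} => c i j.1 * c i' j.1) (if i = i' then 1 else 0) := by
    intro i hi i' hi'
    rcases le_total i i' with h | h
    · exact h_orth i i' (mem_Icc.1 hi).1 h (mem_Icc.1 hi').2
    · simpa [mul_comm, eq_comm] using h_orth i' i (mem_Icc.1 hi').1 h (mem_Icc.1 hi).2
  refine sum_Icc_mul_le_sum_Icc_mul (fun i hi j hj hij => hω_mono i j hi.1 hij hj.2)
    (fun i hi => (hω_pos i (mem_Icc.1 hi).1 (mem_Icc.1 hi).2).le) fun m hm => ?_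
  have hmk : Icc 1 m ⊆ Icc 1 k := Icc_subset_Icc_right (mem_Icc.1 hm).2
  exact sum_Icc_le_sum_Icc_tsum_mul_sq (fun i hi j _ hij => hlam_mono i j hi hij) (mem_Icc.1 hm).1
    (fun i hi i' hi' => h_orth_symm i (hmk hi) i' (hmk hi'))
    fun i hi => h_summable i (mem_Icc.1 hi).1 (mem_Icc.1 (hmk hi)).2

/-- The core coefficient-level inequality underlying the variational
characterisations: for a nonnegative nondecreasing sequence `(λⱼ)ⱼ≥1`, weights
`ω₁ ≥ ⋯ ≥ ω_k > 0`, and orthonormal `c₁, …, c_k ∈ ℓ²(ℕ≥1)` with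
`∑ⱼ≥1 λⱼ cᵢⱼ² < ∞`, one has `∑ᵢ ωᵢ ∑ⱼ≥1 λⱼ cᵢⱼ² ≥ ∑ᵢ ωᵢ λᵢ`. -/
theorem coefficient_level_inequality
    (lam : ℕ → ℝ)
    (hlam_nonneg : ∀ j, 1 ≤ j → 0 ≤ lam j)
    (hlam_mono : ∀ i j, 1 ≤ i → i ≤ j → lam i ≤ lam j)
    (k : ℕ) (hk : 1 ≤ k)
    (ω : ℕ → ℝ)
    (hω_mono : ∀ i j, 1 ≤ i → i ≤ j → j ≤ k → ω j ≤ ω i)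
    (hω_pos : ∀ i, 1 ≤ i → i ≤ k → 0 < ω i)
    (c : ℕ → ℕ → ℝ)
    (h_orth : ∀ i i', 1 ≤ i → i ≤ i' → i' ≤ k →
      HasSum (fun j : {j : ℕ // 1 ≤ j} => c i j.1 * c i' j.1)
        (if i = i' then 1 else 0))
    (h_summable : ∀ i, 1 ≤ i → i ≤ k →
      Summable (fun j : {j : ℕ // 1 ≤ j} => lam j.1 * c i j.1 ^ 2)) :
    ∑ i ∈ Finset.Icc 1 k, ω i * lam i
      ≤ ∑ i ∈ Finset.Icc 1 k,
          ω i * ∑' j : {j : ℕ // 1 ≤ j}, lam j.1 * c i j.1 ^ 2 :=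
  coefficient_level_inequality_general lam hlam_mono k ω hω_mono hω_pos c h_orth h_summable
end
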